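/- Let 0 < κ ≤ λ, let J be an ordered partition of {1,…,q}, and let c ∈ relint(λ·τ_J). Then for every t ∈ (0, 1], the point (1 − t)·(λ/κ)·π_κ(c) + t·c belongs to relint(λ·τ_J). -/

import Mathlib

open Set Pointwise

noncomputable section

/-- The vertex `P_ρ` of the permutohedron: the point whose `ρ(k)`-th coordinate is
`k − (q+1)/2` (with `k` running through `1,…,q`, here 0-indexed as `Fin q`). -/
def vertexPoint (q : ℕ) (ρ : Equiv.Perm (Fin q)) : EuclideanSpace ℝ (Fin q) :=
  WithLp.toLp 2 (fun i => ((ρ.symm i : ℕ) + 1 : ℝ) - ((q : ℝ) + 1) / 2)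

/-- The permutohedron `P^{q−1} ⊂ ℝ^q`: the convex hull of the points `P_ρ`. -/
def permutohedron (q : ℕ) : Set (EuclideanSpace ℝ (Fin q)) :=
  convexHull ℝ (Set.range (vertexPoint q))

/-- An ordered partition `J = (J_1,…,J_s)` of `{1,…,q}` into `s` nonempty subsets. -/
structure OrderedPartition (q s : ℕ) where
  blocks : Fin s → Finset (Fin q)
  nonempty : ∀ k, (blocks k).Nonempty
  disjoint : ∀ k l, k ≠ l → Disjoint (blocks k) (blocks l)
  covers : ∀ j : Fin q, ∃ k, j ∈ blocks k

/-- `cumCard J n = r_n`, the total cardinality of the first `n` blocks. -/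
def cumCard {q s : ℕ} (J : OrderedPartition q s) (n : ℕ) : ℕ :=
  ∑ i ∈ Finset.univ.filter (fun i : Fin s => (i : ℕ) < n), (J.blocks i).card

/-- A permutation `π` is compatible with the ordered partition `J` if it maps the
`k`-th consecutive block `{r_{k−1}+1,…,r_k}` (0-indexed: `[r_{k−1}, r_k)`) onto `J_k`;
these are exactly the permutations `σρ` with `σ` in the Young subgroup. -/
def compatiblePerm {q s : ℕ} (J : OrderedPartition q s) (π : Equiv.Perm (Fin q)) : Prop :=
  ∀ (k : Fin s) (i : Fin q),
    π i ∈ J.blocks k ↔ cumCard J (k : ℕ) ≤ (i : ℕ) ∧ (i : ℕ) < cumCard J ((k : ℕ) + 1)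

/-- The face `τ_J` of the permutohedron corresponding to the ordered partition `J`. -/
def face (q s : ℕ) (J : OrderedPartition q s) : Set (EuclideanSpace ℝ (Fin q)) :=
  convexHull ℝ {x | ∃ π : Equiv.Perm (Fin q), compatiblePerm J π ∧ x = vertexPoint q π}

/-- The metric projection onto a set `K`: a point of `K` at minimal distance
(unique when `K` is compact, convex and nonempty in Euclidean space). -/
def metricProj {E : Type*} [MetricSpace E] [Nonempty E] (K : Set E) (c : E) : E :=
  Classical.epsilon fun y => y ∈ K ∧ ∀ z ∈ K, dist c y ≤ dist c z

/-! Let `p` be the projection of `c` onto `κ • τ_J`. Since `(λ/κ) • p ∈ λ • τ_J`, the claim follows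
from the convexity of the relative interior once `p` is shown to be the projection onto `κ • P`
as well, i.e. once the variational inequality `⟪c - p, z - p⟫ ≤ 0` holds on all of `κ • P`. This is
the case as soon as `w := c - p` is weakly increasing from each block of `J` to the later ones:
a vertex of `τ_J` that sorts `w` then maximizes `⟪w, ·⟫` over all of `P` by the rearrangement
inequality.

The monotonicity comes from bounds `(λ - κ) a_k ≤ w i ≤ (λ - κ) b_k` for `i ∈ J_k`, where `a_k` and
`b_k` are the smallest and largest values the coordinates in `J_k` take on `τ_J`. For the upper
bound let `T ⊆ J_k` be the set of `j` with `w i ≤ w j` and `B` the sum of the `#T` largest values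
of the block. Every point of `τ_J` has coordinate sum at most `B` on `T`, while `p / κ` maximizes
`⟪w, ·⟫` on `τ_J`, so it is a convex combination of vertices which (by a swap argument) put
exactly these largest values on `T`. Hence `#T • w i ≤ ∑ T w ≤ λ B - κ B ≤ (λ - κ) #T b_k`. -/

open RealInnerProductSpace Finset

theorem metricProj_spec {E : Type*} [MetricSpace E] [Nonempty E] {K : Set E} (hK : IsCompact K)
    (hne : K.Nonempty) (c : E) :
    metricProj K c ∈ K ∧ ∀ z ∈ K, dist c (metricProj K c) ≤ dist c z := by
  obtain ⟨p, hp, hmin⟩ := hK.exists_isMinOn hne (continuous_const.dist continuous_id).continuousOn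
  exact Classical.epsilon_spec (p := fun y => y ∈ K ∧ ∀ z ∈ K, dist c y ≤ dist c z)
    ⟨p, hp, fun z hz => hmin hz⟩

section VariationalInequality

variable {E : Type*} [NormedAddCommGroup E] [InnerProductSpace ℝ E]

theorem forall_dist_le_iff_inner_le_zero {K : Set E} (hK : Convex ℝ K) {c p : E} (hp : p ∈ K) :
    (∀ z ∈ K, dist c p ≤ dist c z) ↔ ∀ z ∈ K, ⟪c - p, z - p⟫ ≤ 0 := by
  have : Nonempty K := ⟨⟨p, hp⟩⟩
  have hbdd : BddBelow (Set.range fun z : K => ‖c - z‖) :=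
    ⟨0, by rintro _ ⟨z, rfl⟩; positivity⟩
  simp only [dist_eq_norm, ← norm_eq_iInf_iff_real_inner_le_zero hK hp]
  exact ⟨fun h => le_antisymm (le_ciInf fun z => h z z.2) (ciInf_le hbdd ⟨p, hp⟩),
    fun h z hz => h ▸ ciInf_le hbdd ⟨z, hz⟩⟩

theorem eq_of_forall_inner_le_zero {K : Set E} {c p p' : E} (hp : p ∈ K) (hp' : p' ∈ K)
    (h : ∀ z ∈ K, ⟪c - p, z - p⟫ ≤ 0) (h' : ∀ z ∈ K, ⟪c - p', z - p'⟫ ≤ 0) : p = p' := by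
  have hsum : ⟪p - p', p - p'⟫ = ⟪c - p, p' - p⟫ + ⟪c - p', p - p'⟫ := by
    simp only [inner_sub_left, inner_sub_right, real_inner_comm p p']
    ring
  have := h p' hp'
  have := h' p hp
  exact sub_eq_zero.1 (real_inner_self_nonpos.1 (by linarith))

theorem metricProj_eq_of_forall_inner_le_zero {K : Set E} (hK : IsCompact K) (hconv : Convex ℝ K)
    {c p : E} (hp : p ∈ K) (h : ∀ z ∈ K, ⟪c - p, z - p⟫ ≤ 0) : metricProj K c = p := by
  obtain ⟨hmem, hmin⟩ := metricProj_spec hK ⟨p, hp⟩ c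
  exact eq_of_forall_inner_le_zero hmem hp
    ((forall_dist_le_iff_inner_le_zero hconv hmem).1 hmin) h

theorem inner_le_of_mem_convexHull {V : Set E} {w x : E} {b : ℝ} (hx : x ∈ convexHull ℝ V)
    (hV : ∀ v ∈ V, ⟪w, v⟫ ≤ b) : ⟪w, x⟫ ≤ b :=
  convexHull_min hV (convex_halfSpace_le (innerₛₗ ℝ w).isLinear b) hx

theorem mem_convexHull_setOf_inner_eq {V : Set E} {w x : E} (hx : x ∈ convexHull ℝ V)
    (hmax : ∀ v ∈ V, ⟪w, v⟫ ≤ ⟪w, x⟫) : x ∈ convexHull ℝ {v ∈ V | ⟪w, v⟫ = ⟪w, x⟫} := by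
  set M := ⟪w, x⟫
  let S : Set E := {y | ⟪w, y⟫ ≤ M ∧ (⟪w, y⟫ = M → y ∈ convexHull ℝ {v ∈ V | ⟪w, v⟫ = M})}
  have hVS : V ⊆ S := fun v hv => ⟨hmax v hv, fun h => subset_convexHull ℝ _ ⟨hv, h⟩⟩
  have hS : Convex ℝ S := by
    intro y hy z hz a b ha hb hab
    have hval : ⟪w, a • y + b • z⟫ = a * ⟪w, y⟫ + b * ⟪w, z⟫ := by
      rw [inner_add_right, real_inner_smul_right, real_inner_smul_right]
    have hya := mul_le_mul_of_nonneg_left hy.1 ha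
    have hzb := mul_le_mul_of_nonneg_left hz.1 hb
    have hM : a * M + b * M = M := by rw [← add_mul, hab, one_mul]
    refine ⟨by linarith, fun h => ?_⟩
    rcases ha.eq_or_lt with rfl | ha'
    · obtain rfl : b = 1 := by linarith
      simpa using hz.2 (by simpa using h)
    rcases hb.eq_or_lt with rfl | hb'
    · obtain rfl : a = 1 := by linarith
      simpa using hy.2 (by simpa using h)
    rw [hval] at h
    have hyM : ⟪w, y⟫ = M := by
      by_contra hne
      linarith [mul_lt_mul_of_pos_left (lt_of_le_of_ne hy.1 hne) ha']
    have hzM : ⟪w, z⟫ = M := by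
      by_contra hne
      linarith [mul_lt_mul_of_pos_left (lt_of_le_of_ne hz.1 hne) hb']
    exact convex_convexHull ℝ _ (hy.2 hyM) (hz.2 hzM) ha hb hab
  exact (convexHull_min hVS hS hx).2 rfl

end VariationalInequality

section IntrinsicInterior

variable {V : Type*} [NormedAddCommGroup V] [NormedSpace ℝ V] {S : Set V}

theorem mem_intrinsicInterior_iff_ball {y : V} :
    y ∈ intrinsicInterior ℝ S ↔
      y ∈ affineSpan ℝ S ∧ ∃ ε > 0, ∀ v ∈ affineSpan ℝ S, dist v y < ε → v ∈ S := by
  constructor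
  · intro hy
    obtain ⟨y', hy', rfl⟩ := mem_intrinsicInterior.1 hy
    obtain ⟨ε, hε, hball⟩ := Metric.mem_nhds_iff.1 (mem_interior_iff_mem_nhds.1 hy')
    exact ⟨y'.2, ε, hε, fun v hv hvy => hball (show (⟨v, hv⟩ : affineSpan ℝ S) ∈ _ from hvy)⟩
  · rintro ⟨hy, ε, hε, hball⟩
    refine mem_intrinsicInterior.2 ⟨⟨y, hy⟩, mem_interior_iff_mem_nhds.2 ?_, rfl⟩
    exact Metric.mem_nhds_iff.2 ⟨ε, hε, fun v hv => hball v v.2 hv⟩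

theorem Convex.combo_mem_intrinsicInterior (hS : Convex ℝ S) {x y : V} (hx : x ∈ S)
    (hy : y ∈ intrinsicInterior ℝ S) {t : ℝ} (ht : t ∈ Set.Ioc (0 : ℝ) 1) :
    (1 - t) • x + t • y ∈ intrinsicInterior ℝ S := by
  obtain ⟨hyA, ε, hε, hball⟩ := mem_intrinsicInterior_iff_ball.1 hy
  have hxA : x ∈ affineSpan ℝ S := subset_affineSpan ℝ S hx
  have ht0 : t ≠ 0 := ht.1.ne'
  refine mem_intrinsicInterior_iff_ball.2 ⟨?_, t * ε, mul_pos ht.1 hε, fun v hv hvz => ?_⟩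
  · simpa only [AffineMap.lineMap_apply_module] using AffineMap.lineMap_mem t hxA hyA
  -- `v` is the point at parameter `t` on the segment from `x` to `y' := lineMap x v t⁻¹`,
  -- and `y'` is within `ε` of `y`.
  set y' := AffineMap.lineMap x v t⁻¹ with hy'
  have hy'S : y' ∈ S := by
    refine hball y' (AffineMap.lineMap_mem _ hxA hv) ?_
    have : y' - y = t⁻¹ • (v - ((1 - t) • x + t • y)) := by
      rw [hy', AffineMap.lineMap_apply_module]
      match_scalars <;> field_simp
      ring
    rw [dist_eq_norm, this, norm_smul, Real.norm_eq_abs, abs_inv, abs_of_pos ht.1,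
      ← dist_eq_norm, inv_mul_lt_iff₀ ht.1]
    exact hvz
  convert hS hx hy'S (sub_nonneg.2 ht.2) ht.1.le (by ring) using 1
  rw [hy', AffineMap.lineMap_apply_module]
  match_scalars <;> field_simp
  ring

end IntrinsicInterior

theorem Fin.mem_iff_lt_card_of_isLowerSet {n : ℕ} {D : Finset (Fin n)}
    (hD : IsLowerSet (D : Set (Fin n))) (i : Fin n) : i ∈ D ↔ (i : ℕ) < #D := by
  rcases hD.eq_univ_or_Iio with h | ⟨a, h⟩
  · rw [Finset.coe_eq_univ.1 h, Finset.card_univ, Fintype.card_fin]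
    simp
  · rw [← Finset.coe_Iio, Finset.coe_inj] at h
    subst h
    rw [Finset.mem_Iio, Fin.card_Iio, Fin.lt_def]

namespace OrderedPartition

variable {q s : ℕ} (J : OrderedPartition q s)

def blockIdx (i : Fin q) : Fin s := (J.covers i).choose

variable {J}

theorem mem_blocks_iff {i : Fin q} {k : Fin s} : i ∈ J.blocks k ↔ J.blockIdx i = k := by
  refine ⟨fun h => ?_, fun h => h ▸ (J.covers i).choose_spec⟩
  by_contra hne
  exact Finset.disjoint_left.1 (J.disjoint _ _ hne) (J.covers i).choose_spec h

theorem card_filter_blockIdx_lt (n : ℕ) :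
    #{i | (J.blockIdx i : ℕ) < n} = cumCard J n := by
  classical
  have : ({i | (J.blockIdx i : ℕ) < n} : Finset (Fin q)) =
      ({k | (k : ℕ) < n} : Finset (Fin s)).biUnion J.blocks := by
    ext i
    simp [mem_blocks_iff]
  rw [this, Finset.card_biUnion fun k _ l _ hkl => J.disjoint k l hkl]
  rfl

theorem cumCard_mono : Monotone (cumCard J) := fun _ _ hmn =>
  Finset.sum_le_sum_of_subset fun k => by
    simp only [Finset.mem_filter, Finset.mem_univ, true_and]; omega

theorem cumCard_succ (k : Fin s) :
    cumCard J (k + 1) = cumCard J k + #(J.blocks k) := by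
  classical
  have : Finset.univ.filter (fun l : Fin s => (l : ℕ) < k + 1) =
      insert k (Finset.univ.filter fun l : Fin s => (l : ℕ) < k) := by
    ext l
    simp only [Finset.mem_filter, Finset.mem_univ, true_and, Finset.mem_insert, Fin.ext_iff]
    omega
  rw [cumCard, this, Finset.sum_insert (by simp), add_comm]
  rfl

end OrderedPartition

open OrderedPartition

namespace compatiblePerm

variable {q s : ℕ} {J : OrderedPartition q s}

theorem symm_mem_range {ρ : Equiv.Perm (Fin q)} (hρ : compatiblePerm J ρ) {k : Fin s} {i : Fin q}
    (hi : i ∈ J.blocks k) : cumCard J k ≤ ρ.symm i ∧ (ρ.symm i : ℕ) < cumCard J (k + 1) :=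
  (hρ k _).1 (by simpa using hi)

theorem mul_swap {ρ : Equiv.Perm (Fin q)} (hρ : compatiblePerm J ρ) {a b : Fin q}
    (hab : J.blockIdx (ρ a) = J.blockIdx (ρ b)) : compatiblePerm J (ρ * Equiv.swap a b) := by
  intro k i
  rw [← hρ k i, Equiv.Perm.mul_apply, mem_blocks_iff, mem_blocks_iff, Equiv.swap_apply_def]
  split_ifs with hia hib
  · rw [hia, hab]
  · rw [hib, hab]
  · rfl

end compatiblePerm

theorem compatiblePerm_of_monotone {q s : ℕ} {J : OrderedPartition q s}
    {τ : Equiv.Perm (Fin q)} (hτ : Monotone fun pos => J.blockIdx (τ pos)) :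
    compatiblePerm J τ := by
  classical
  have hlt : ∀ (n : ℕ) (pos : Fin q), (J.blockIdx (τ pos) : ℕ) < n ↔ (pos : ℕ) < cumCard J n := by
    intro n pos
    have hcard : #{pos | (J.blockIdx (τ pos) : ℕ) < n} = cumCard J n := by
      rw [← card_filter_blockIdx_lt]
      exact Finset.card_equiv τ (by simp)
    rw [← hcard, ← Fin.mem_iff_lt_card_of_isLowerSet, Finset.mem_filter]
    · simp
    · intro a b hba ha
      simp only [Finset.coe_filter, Finset.mem_univ, true_and, Set.mem_ofPred_eq] at ha ⊢
      exact lt_of_le_of_lt (Fin.le_iff_val_le_val.1 (hτ hba)) ha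
  intro k pos
  have h₁ := hlt k pos
  have h₂ := hlt (k + 1) pos
  rw [mem_blocks_iff, Fin.ext_iff]
  omega

theorem exists_compatiblePerm_monotone {q s : ℕ} (J : OrderedPartition q s) (w : Fin q → ℝ)
    (hw : ∀ i j, J.blockIdx i < J.blockIdx j → w i ≤ w j) :
    ∃ τ : Equiv.Perm (Fin q), compatiblePerm J τ ∧ Monotone fun pos => w (τ pos) := by
  let key : Fin q → Fin s ×ₗ ℝ := fun i => toLex (J.blockIdx i, w i)
  have hsort : Monotone (key ∘ Tuple.sort key) := Tuple.monotone_sort key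
  refine ⟨Tuple.sort key, compatiblePerm_of_monotone fun a b hab =>
    Prod.Lex.monotone_fst _ _ (hsort hab), fun a b hab => ?_⟩
  rcases Prod.Lex.le_iff.1 (hsort hab) with h | h
  · exact hw _ _ h
  · exact h.2

section IntervalSums

variable {M : Type*} [AddCommMonoid M] [PartialOrder M] [IsOrderedAddMonoid M] {f : ℕ → M}

theorem Finset.sum_le_sum_Ico_of_forall_lt (hf : Monotone f) (S : Finset ℕ) {b : ℕ}
    (hS : ∀ n ∈ S, n < b) : ∑ n ∈ S, f n ≤ ∑ n ∈ Ico (b - #S) b, f n := by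
  induction S using Finset.induction_on_max generalizing b with
  | empty => simp
  | insert a S ha ih =>
    have haS : a ∉ S := fun h => (ha a h).false
    have hab : a < b := hS a (mem_insert_self a S)
    obtain ⟨b, rfl⟩ : ∃ b', b = b' + 1 := ⟨b - 1, by omega⟩
    have := ih (b := b) fun n hn => by have := ha n hn; omega
    rw [sum_insert haS, card_insert_of_notMem haS, show b + 1 - (#S + 1) = b - #S by omega,
      sum_Ico_succ_top (by omega), add_comm]
    exact add_le_add this (hf (by omega))

theorem Finset.sum_Ico_le_sum_of_forall_le (hf : Monotone f) (S : Finset ℕ) {a : ℕ}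
    (hS : ∀ n ∈ S, a ≤ n) : ∑ n ∈ Ico a (a + #S), f n ≤ ∑ n ∈ S, f n := by
  induction S using Finset.induction_on_min generalizing a with
  | empty => simp
  | insert m S hm ih =>
    have hmS : m ∉ S := fun h => (hm m h).false
    have ham : a ≤ m := hS m (mem_insert_self m S)
    have := ih (a := a + 1) fun n hn => by have := hm n hn; omega
    rw [sum_insert hmS, card_insert_of_notMem hmS, show a + (#S + 1) = a + 1 + #S by omega,
      sum_eq_sum_Ico_succ_bot (by omega)]
    exact add_le_add (hf ham) this

end IntervalSums

section Vertices

variable {q : ℕ}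

def coordVal (q n : ℕ) : ℝ := n + 1 - ((q : ℝ) + 1) / 2

theorem coordVal_strictMono : StrictMono (coordVal q) := fun a b hab => by
  have : (a : ℝ) < b := Nat.cast_lt.2 hab
  unfold coordVal
  linarith

theorem vertexPoint_apply (ρ : Equiv.Perm (Fin q)) (i : Fin q) :
    vertexPoint q ρ i = coordVal q (ρ.symm i) := rfl

theorem inner_vertexPoint (w : EuclideanSpace ℝ (Fin q)) (ρ : Equiv.Perm (Fin q)) :
    ⟪w, vertexPoint q ρ⟫ = ∑ pos, w (ρ pos) * coordVal q pos := by
  rw [PiLp.inner_apply, ← Equiv.sum_comp ρ]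
  simp [vertexPoint_apply, mul_comm]

theorem inner_vertexPoint_mul_swap (w : EuclideanSpace ℝ (Fin q)) (ρ : Equiv.Perm (Fin q))
    {a b : Fin q} (hab : a ≠ b) :
    ⟪w, vertexPoint q (ρ * Equiv.swap a b)⟫ =
      ⟪w, vertexPoint q ρ⟫ + (w (ρ b) - w (ρ a)) * (coordVal q a - coordVal q b) := by
  rw [inner_vertexPoint, inner_vertexPoint, ← sub_eq_iff_eq_add', ← Finset.sum_sub_distrib,
    ← Finset.sum_subset (Finset.subset_univ {a, b}), Finset.sum_pair hab]
  · simp only [Equiv.Perm.mul_apply, Equiv.swap_apply_left, Equiv.swap_apply_right]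
    ring
  · intro pos _ hpos
    simp only [Finset.mem_insert, Finset.mem_singleton, not_or] at hpos
    simp [Equiv.swap_apply_of_ne_of_ne hpos.1 hpos.2]

theorem inner_vertexPoint_le_of_monotone {w : EuclideanSpace ℝ (Fin q)} {τ : Equiv.Perm (Fin q)}
    (hτ : Monotone fun pos => w (τ pos)) (σ : Equiv.Perm (Fin q)) :
    ⟪w, vertexPoint q σ⟫ ≤ ⟪w, vertexPoint q τ⟫ := by
  have hmv : Monovary (fun pos : Fin q => coordVal q pos) fun pos => w (τ pos) :=
    Monotone.monovary (fun _ _ h => coordVal_strictMono.monotone h) hτ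
  have := hmv.sum_smul_comp_perm_le_sum_smul (σ := τ⁻¹ * σ)
  simp only [smul_eq_mul, Equiv.Perm.mul_apply, Equiv.Perm.inv_def, Equiv.apply_symm_apply] at this
  simpa only [inner_vertexPoint, mul_comm] using this

theorem sum_vertexPoint_le_sum_Ico {σ : Equiv.Perm (Fin q)} {T : Finset (Fin q)} {b : ℕ}
    (hT : ∀ i ∈ T, (σ.symm i : ℕ) < b) :
    ∑ i ∈ T, vertexPoint q σ i ≤ ∑ n ∈ Finset.Ico (b - #T) b, coordVal q n := by
  have hinj : Function.Injective fun i => (σ.symm i : ℕ) := Fin.val_injective.comp σ.symm.injective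
  have := Finset.sum_le_sum_Ico_of_forall_lt (coordVal_strictMono (q := q)).monotone (T.image _)
    (b := b) (by simpa using hT)
  rwa [Finset.sum_image fun i _ j _ h => hinj h, Finset.card_image_of_injective _ hinj] at this

theorem sum_Ico_le_sum_vertexPoint {σ : Equiv.Perm (Fin q)} {T : Finset (Fin q)} {a : ℕ}
    (hT : ∀ i ∈ T, a ≤ (σ.symm i : ℕ)) :
    ∑ n ∈ Finset.Ico a (a + #T), coordVal q n ≤ ∑ i ∈ T, vertexPoint q σ i := by
  have hinj : Function.Injective fun i => (σ.symm i : ℕ) := Fin.val_injective.comp σ.symm.injective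
  have := Finset.sum_Ico_le_sum_of_forall_le (coordVal_strictMono (q := q)).monotone (T.image _)
    (a := a) (by simpa using hT)
  rwa [Finset.sum_image fun i _ j _ h => hinj h, Finset.card_image_of_injective _ hinj] at this

end Vertices

section Face

variable {q s : ℕ} {J : OrderedPartition q s}

theorem vertexPoint_mem_face {σ : Equiv.Perm (Fin q)} (hσ : compatiblePerm J σ) :
    vertexPoint q σ ∈ face q s J :=
  subset_convexHull ℝ _ ⟨σ, hσ, rfl⟩

theorem face_subset_permutohedron : face q s J ⊆ permutohedron q :=
  convexHull_mono (by rintro _ ⟨σ, -, rfl⟩; exact ⟨σ, rfl⟩)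

theorem isCompact_permutohedron : IsCompact (permutohedron q) :=
  (Set.finite_range _).isCompact_convexHull ℝ

theorem isCompact_face : IsCompact (face q s J) :=
  ((Set.finite_range (vertexPoint q)).subset
    (by rintro _ ⟨σ, -, rfl⟩; exact ⟨σ, rfl⟩)).isCompact_convexHull ℝ

theorem isLinearMap_sum_apply (T : Finset (Fin q)) :
    IsLinearMap ℝ fun x : EuclideanSpace ℝ (Fin q) => ∑ i ∈ T, x i :=
  ⟨fun x y => by simp [Finset.sum_add_distrib], fun r x => by simp [Finset.mul_sum]⟩

theorem sum_apply_le_sum_Ico_of_mem_face {k : Fin s} {T : Finset (Fin q)} (hT : T ⊆ J.blocks k)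
    {x : EuclideanSpace ℝ (Fin q)} (hx : x ∈ face q s J) :
    ∑ i ∈ T, x i ≤ ∑ n ∈ Ico (cumCard J (k + 1) - #T) (cumCard J (k + 1)), coordVal q n := by
  refine convexHull_min ?_ (convex_halfSpace_le (isLinearMap_sum_apply T) _) hx
  rintro _ ⟨σ, hσ, rfl⟩
  exact sum_vertexPoint_le_sum_Ico fun i hi => (hσ.symm_mem_range (hT hi)).2

theorem sum_Ico_le_sum_apply_of_mem_face {k : Fin s} {T : Finset (Fin q)} (hT : T ⊆ J.blocks k)
    {x : EuclideanSpace ℝ (Fin q)} (hx : x ∈ face q s J) :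
    ∑ n ∈ Ico (cumCard J k) (cumCard J k + #T), coordVal q n ≤ ∑ i ∈ T, x i := by
  refine convexHull_min ?_ (convex_halfSpace_ge (isLinearMap_sum_apply T) _) hx
  rintro _ ⟨σ, hσ, rfl⟩
  exact sum_Ico_le_sum_vertexPoint fun i hi => (hσ.symm_mem_range (hT hi)).1

end Face

section Maximizers

variable {q s : ℕ} {J : OrderedPartition q s} {w : EuclideanSpace ℝ (Fin q)}
  {ρ : Equiv.Perm (Fin q)}

theorem symm_lt_symm_of_isMax (hρ : compatiblePerm J ρ)
    (hmax : ∀ σ, compatiblePerm J σ → ⟪w, vertexPoint q σ⟫ ≤ ⟪w, vertexPoint q ρ⟫)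
    {i j : Fin q} (hij : J.blockIdx i = J.blockIdx j) (hw : w i < w j) : ρ.symm i < ρ.symm j := by
  -- Otherwise swapping the two positions keeps `ρ` compatible and increases the functional.
  by_contra! hle
  have hne : ρ.symm j ≠ ρ.symm i := fun h => hw.ne (by rw [ρ.symm.injective h])
  have hswap := hmax _ (hρ.mul_swap (a := ρ.symm j) (b := ρ.symm i) (by simpa using hij.symm))
  rw [inner_vertexPoint_mul_swap w ρ hne, Equiv.apply_symm_apply, Equiv.apply_symm_apply] at hswap
  have hlt : (ρ.symm j : ℕ) < ρ.symm i := lt_of_le_of_ne hle (Fin.val_injective.ne hne)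
  have := coordVal_strictMono (q := q) hlt
  nlinarith

theorem cumCard_succ_sub_card_le_symm (hρ : compatiblePerm J ρ)
    (hmax : ∀ σ, compatiblePerm J σ → ⟪w, vertexPoint q σ⟫ ≤ ⟪w, vertexPoint q ρ⟫)
    {k : Fin s} {T : Finset (Fin q)} (hT : T ⊆ J.blocks k)
    (hup : ∀ i ∈ T, ∀ j ∈ J.blocks k \ T, w j < w i) {i : Fin q} (hi : i ∈ T) :
    cumCard J (k + 1) - #T ≤ ρ.symm i := by
  have hsub : (J.blocks k \ T).image (fun j => (ρ.symm j : ℕ)) ⊆ Ico (cumCard J k) (ρ.symm i) := by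
    intro n hn
    obtain ⟨j, hj, rfl⟩ := Finset.mem_image.1 hn
    have hjk := (Finset.mem_sdiff.1 hj).1
    exact Finset.mem_Ico.2 ⟨(hρ.symm_mem_range hjk).1, symm_lt_symm_of_isMax hρ hmax
      (by rw [mem_blocks_iff.1 hjk, mem_blocks_iff.1 (hT hi)]) (hup i hi j hj)⟩
  have hinj : Function.Injective fun j => (ρ.symm j : ℕ) := Fin.val_injective.comp ρ.symm.injective
  have hcard := Finset.card_le_card hsub
  rw [Finset.card_image_of_injective _ hinj,
    card_sdiff_of_subset hT, Nat.card_Ico] at hcard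
  have := cumCard_succ (J := J) k
  have := Finset.card_le_card hT
  have := (hρ.symm_mem_range (hT hi)).1
  omega

theorem symm_lt_cumCard_add_card (hρ : compatiblePerm J ρ)
    (hmax : ∀ σ, compatiblePerm J σ → ⟪w, vertexPoint q σ⟫ ≤ ⟪w, vertexPoint q ρ⟫)
    {k : Fin s} {T : Finset (Fin q)} (hT : T ⊆ J.blocks k)
    (hlow : ∀ i ∈ T, ∀ j ∈ J.blocks k \ T, w i < w j) {i : Fin q} (hi : i ∈ T) :
    (ρ.symm i : ℕ) < cumCard J k + #T := by
  have hsub : (J.blocks k \ T).image (fun j => (ρ.symm j : ℕ)) ⊆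
      Ioo (ρ.symm i : ℕ) (cumCard J (k + 1)) := by
    intro n hn
    obtain ⟨j, hj, rfl⟩ := Finset.mem_image.1 hn
    have hjk := (Finset.mem_sdiff.1 hj).1
    exact Finset.mem_Ioo.2 ⟨symm_lt_symm_of_isMax hρ hmax
      (by rw [mem_blocks_iff.1 hjk, mem_blocks_iff.1 (hT hi)]) (hlow i hi j hj),
      (hρ.symm_mem_range hjk).2⟩
  have hinj : Function.Injective fun j => (ρ.symm j : ℕ) := Fin.val_injective.comp ρ.symm.injective
  have hcard := Finset.card_le_card hsub
  rw [Finset.card_image_of_injective _ hinj,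
    card_sdiff_of_subset hT, Nat.card_Ioo] at hcard
  have := cumCard_succ (J := J) k
  have := Finset.card_le_card hT
  have := (hρ.symm_mem_range (hT hi)).2
  omega

theorem mem_of_mem_face_of_isMax {x : EuclideanSpace ℝ (Fin q)} (hx : x ∈ face q s J)
    (hmax : ∀ σ, compatiblePerm J σ → ⟪w, vertexPoint q σ⟫ ≤ ⟪w, x⟫)
    {P : Set (EuclideanSpace ℝ (Fin q))} (hP : Convex ℝ P)
    (hv : ∀ σ, compatiblePerm J σ →
      (∀ τ, compatiblePerm J τ → ⟪w, vertexPoint q τ⟫ ≤ ⟪w, vertexPoint q σ⟫) →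
        vertexPoint q σ ∈ P) : x ∈ P := by
  refine convexHull_min ?_ hP (mem_convexHull_setOf_inner_eq (w := w) hx ?_)
  · rintro _ ⟨⟨σ, hσ, rfl⟩, heq⟩
    exact hv σ hσ fun τ hτ => heq ▸ hmax τ hτ
  · rintro _ ⟨σ, hσ, rfl⟩
    exact hmax σ hσ

theorem sum_Ico_le_sum_apply_of_isMax {x : EuclideanSpace ℝ (Fin q)} (hx : x ∈ face q s J)
    (hmax : ∀ σ, compatiblePerm J σ → ⟪w, vertexPoint q σ⟫ ≤ ⟪w, x⟫)
    {k : Fin s} {T : Finset (Fin q)} (hT : T ⊆ J.blocks k)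
    (hup : ∀ i ∈ T, ∀ j ∈ J.blocks k \ T, w j < w i) :
    ∑ n ∈ Ico (cumCard J (k + 1) - #T) (cumCard J (k + 1)), coordVal q n ≤ ∑ i ∈ T, x i := by
  refine mem_of_mem_face_of_isMax hx hmax (convex_halfSpace_ge (isLinearMap_sum_apply T) _)
    fun σ hσ hσmax => ?_
  have hle : #T ≤ cumCard J (k + 1) := by
    have := cumCard_succ (J := J) k
    have := Finset.card_le_card hT
    omega
  show (_ : ℝ) ≤ _
  simpa only [Nat.sub_add_cancel hle] using sum_Ico_le_sum_vertexPoint (T := T)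
    fun i hi => cumCard_succ_sub_card_le_symm hσ hσmax hT hup hi

theorem sum_apply_le_sum_Ico_of_isMax {x : EuclideanSpace ℝ (Fin q)} (hx : x ∈ face q s J)
    (hmax : ∀ σ, compatiblePerm J σ → ⟪w, vertexPoint q σ⟫ ≤ ⟪w, x⟫)
    {k : Fin s} {T : Finset (Fin q)} (hT : T ⊆ J.blocks k)
    (hlow : ∀ i ∈ T, ∀ j ∈ J.blocks k \ T, w i < w j) :
    ∑ i ∈ T, x i ≤ ∑ n ∈ Ico (cumCard J k) (cumCard J k + #T), coordVal q n := by
  refine mem_of_mem_face_of_isMax hx hmax (convex_halfSpace_le (isLinearMap_sum_apply T) _)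
    fun σ hσ hσmax => ?_
  show (_ : ℝ) ≤ _
  simpa only [Nat.add_sub_cancel] using sum_vertexPoint_le_sum_Ico (T := T)
    fun i hi => symm_lt_cumCard_add_card hσ hσmax hT hlow hi

end Maximizers

section Projection

variable {q s : ℕ} {J : OrderedPartition q s} {κ lam : ℝ}

theorem apply_le_of_mem_blocks (hκ : 0 ≤ κ) (hκlam : κ ≤ lam)
    {xc xp : EuclideanSpace ℝ (Fin q)} (hxc : xc ∈ face q s J) (hxp : xp ∈ face q s J)
    (hmax : ∀ σ, compatiblePerm J σ →
      ⟪lam • xc - κ • xp, vertexPoint q σ⟫ ≤ ⟪lam • xc - κ • xp, xp⟫)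
    {k : Fin s} {i : Fin q} (hi : i ∈ J.blocks k) :
    (lam • xc - κ • xp) i ≤ (lam - κ) * coordVal q (cumCard J (k + 1) - 1) := by
  classical
  set w := lam • xc - κ • xp
  set T := (J.blocks k).filter fun j => w i ≤ w j
  set B := ∑ n ∈ Ico (cumCard J (k + 1) - #T) (cumCard J (k + 1)), coordVal q n
  have hTk : T ⊆ J.blocks k := Finset.filter_subset _ _
  have hup : ∀ j ∈ T, ∀ j' ∈ J.blocks k \ T, w j' < w j := fun j hj j' hj' => by
    simp only [T, Finset.mem_sdiff, Finset.mem_filter, not_and, not_le] at hj hj'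
    exact (hj'.2 hj'.1).trans_le hj.2
  have hc : ∑ j ∈ T, xc j ≤ B := sum_apply_le_sum_Ico_of_mem_face hTk hxc
  have hp : B ≤ ∑ j ∈ T, xp j := sum_Ico_le_sum_apply_of_isMax hxp hmax hTk hup
  have hwT : #T • w i ≤ ∑ j ∈ T, w j :=
    card_nsmul_le_sum _ _ _ fun j hj => (Finset.mem_filter.1 hj).2
  have hB : B ≤ #T • coordVal q (cumCard J (k + 1) - 1) := by
    have hle : #T ≤ cumCard J (k + 1) := by
      have := cumCard_succ (J := J) k
      have := Finset.card_le_card hTk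
      omega
    refine (sum_le_card_nsmul _ _ (coordVal q (cumCard J (k + 1) - 1))
      fun n hn => coordVal_strictMono.monotone ?_).trans_eq ?_
    · have := Finset.mem_Ico.1 hn
      omega
    · rw [Nat.card_Ico, Nat.sub_sub_self hle]
  have hsum : ∑ j ∈ T, w j = lam * ∑ j ∈ T, xc j - κ * ∑ j ∈ T, xp j := by
    simp [w, sum_sub_distrib, mul_sum]
  have hT : (0 : ℝ) < #T := by
    exact_mod_cast Finset.card_pos.2 ⟨i, (Finset.mem_filter.2 ⟨hi, le_rfl⟩ : i ∈ T)⟩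
  rw [nsmul_eq_mul] at hwT hB
  have := mul_le_mul_of_nonneg_left hc (hκ.trans hκlam)
  have := mul_le_mul_of_nonneg_left hp hκ
  have := mul_le_mul_of_nonneg_left hB (sub_nonneg.2 hκlam)
  refine le_of_mul_le_mul_left ?_ hT
  linarith

theorem le_apply_of_mem_blocks (hκ : 0 ≤ κ) (hκlam : κ ≤ lam)
    {xc xp : EuclideanSpace ℝ (Fin q)} (hxc : xc ∈ face q s J) (hxp : xp ∈ face q s J)
    (hmax : ∀ σ, compatiblePerm J σ →
      ⟪lam • xc - κ • xp, vertexPoint q σ⟫ ≤ ⟪lam • xc - κ • xp, xp⟫)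
    {k : Fin s} {i : Fin q} (hi : i ∈ J.blocks k) :
    (lam - κ) * coordVal q (cumCard J k) ≤ (lam • xc - κ • xp) i := by
  classical
  set w := lam • xc - κ • xp
  set T := (J.blocks k).filter fun j => w j ≤ w i
  set B := ∑ n ∈ Ico (cumCard J k) (cumCard J k + #T), coordVal q n
  have hTk : T ⊆ J.blocks k := Finset.filter_subset _ _
  have hlow : ∀ j ∈ T, ∀ j' ∈ J.blocks k \ T, w j < w j' := fun j hj j' hj' => by
    simp only [T, Finset.mem_sdiff, Finset.mem_filter, not_and, not_le] at hj hj'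
    exact hj.2.trans_lt (hj'.2 hj'.1)
  have hc : B ≤ ∑ j ∈ T, xc j := sum_Ico_le_sum_apply_of_mem_face hTk hxc
  have hp : ∑ j ∈ T, xp j ≤ B := sum_apply_le_sum_Ico_of_isMax hxp hmax hTk hlow
  have hwT : ∑ j ∈ T, w j ≤ #T • w i :=
    sum_le_card_nsmul _ _ _ fun j hj => (Finset.mem_filter.1 hj).2
  have hB : #T • coordVal q (cumCard J k) ≤ B := by
    refine (card_nsmul_le_sum _ _ (coordVal q (cumCard J k))
      fun n hn => coordVal_strictMono.monotone ?_).trans_eq' ?_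
    · exact (Finset.mem_Ico.1 hn).1
    · rw [Nat.card_Ico, Nat.add_sub_cancel_left]
  have hsum : ∑ j ∈ T, w j = lam * ∑ j ∈ T, xc j - κ * ∑ j ∈ T, xp j := by
    simp [w, sum_sub_distrib, mul_sum]
  have hT : (0 : ℝ) < #T := by
    exact_mod_cast Finset.card_pos.2 ⟨i, (Finset.mem_filter.2 ⟨hi, le_rfl⟩ : i ∈ T)⟩
  rw [nsmul_eq_mul] at hwT hB
  have := mul_le_mul_of_nonneg_left hc (hκ.trans hκlam)
  have := mul_le_mul_of_nonneg_left hp hκ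
  have := mul_le_mul_of_nonneg_left hB (sub_nonneg.2 hκlam)
  refine le_of_mul_le_mul_left ?_ hT
  linarith

theorem sub_apply_le_of_blockIdx_lt (hκ : 0 < κ) (hκlam : κ ≤ lam)
    {c p : EuclideanSpace ℝ (Fin q)} (hc : c ∈ lam • face q s J) (hp : p ∈ κ • face q s J)
    (hmax : ∀ z ∈ κ • face q s J, ⟪c - p, z⟫ ≤ ⟪c - p, p⟫)
    {i j : Fin q} (hij : J.blockIdx i < J.blockIdx j) : (c - p) i ≤ (c - p) j := by
  obtain ⟨xc, hxc, rfl⟩ := hc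
  obtain ⟨xp, hxp, rfl⟩ := hp
  have hmax' : ∀ σ, compatiblePerm J σ →
      ⟪lam • xc - κ • xp, vertexPoint q σ⟫ ≤ ⟪lam • xc - κ • xp, xp⟫ := fun σ hσ => by
    have := hmax _ (Set.smul_mem_smul_set (vertexPoint_mem_face hσ))
    rw [real_inner_smul_right, real_inner_smul_right] at this
    exact le_of_mul_le_mul_left this hκ
  have hr : cumCard J (J.blockIdx i + 1) - 1 ≤ cumCard J (J.blockIdx j) := by
    have := cumCard_mono (J := J) (show (J.blockIdx i : ℕ) + 1 ≤ J.blockIdx j from hij)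
    omega
  calc (lam • xc - κ • xp) i
      ≤ (lam - κ) * coordVal q (cumCard J (J.blockIdx i + 1) - 1) :=
        apply_le_of_mem_blocks hκ.le hκlam hxc hxp hmax' (mem_blocks_iff.2 rfl)
    _ ≤ (lam - κ) * coordVal q (cumCard J (J.blockIdx j)) :=
        mul_le_mul_of_nonneg_left (coordVal_strictMono.monotone hr) (sub_nonneg.2 hκlam)
    _ ≤ (lam • xc - κ • xp) j :=
        le_apply_of_mem_blocks hκ.le hκlam hxc hxp hmax' (mem_blocks_iff.2 rfl)

theorem metricProj_smul_permutohedron_mem_smul_face (hκ : 0 < κ) (hκlam : κ ≤ lam)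
    {c : EuclideanSpace ℝ (Fin q)} (hc : c ∈ lam • face q s J) :
    metricProj (κ • permutohedron q) c ∈ κ • face q s J := by
  obtain ⟨x₀, hx₀, -⟩ := id hc
  set p := metricProj (κ • face q s J) c
  obtain ⟨hp, hpmin⟩ :=
    metricProj_spec (isCompact_face.smul κ) ⟨κ • x₀, Set.smul_mem_smul_set hx₀⟩ c
  have hVI := (forall_dist_le_iff_inner_le_zero ((convex_convexHull ℝ _).smul κ) hp).1 hpmin
  have hmax : ∀ z ∈ κ • face q s J, ⟪c - p, z⟫ ≤ ⟪c - p, p⟫ := fun z hz => by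
    have := hVI z hz
    rw [inner_sub_right] at this
    linarith
  obtain ⟨τ, hτ, hmono⟩ := exists_compatiblePerm_monotone J (c - p)
    fun i j hij => sub_apply_le_of_blockIdx_lt hκ hκlam hc hp hmax hij
  have hVIP : ∀ z ∈ κ • permutohedron q, ⟪c - p, z - p⟫ ≤ 0 := by
    rintro _ ⟨x, hx, rfl⟩
    have h₁ : ⟪c - p, x⟫ ≤ ⟪c - p, vertexPoint q τ⟫ := inner_le_of_mem_convexHull hx
      (by rintro _ ⟨σ, rfl⟩; exact inner_vertexPoint_le_of_monotone hmono σ)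
    have h₂ := hmax _ (Set.smul_mem_smul_set (vertexPoint_mem_face hτ))
    rw [real_inner_smul_right] at h₂
    rw [inner_sub_right, real_inner_smul_right]
    nlinarith [mul_le_mul_of_nonneg_left h₁ hκ.le]
  rw [metricProj_eq_of_forall_inner_le_zero (isCompact_permutohedron.smul κ)
    ((convex_convexHull ℝ _).smul κ) (Set.smul_set_mono face_subset_permutohedron hp) hVIP]
  exact hp

end Projection

theorem segment_mem_intrinsicInterior_scaled_face_general (q s : ℕ)
    (κ lam : ℝ) (hκ : 0 < κ) (hκlam : κ ≤ lam)
    (J : OrderedPartition q s) (c : EuclideanSpace ℝ (Fin q))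
    (hc : c ∈ intrinsicInterior ℝ (lam • face q s J)) :
    ∀ t ∈ Set.Ioc (0 : ℝ) 1,
      (1 - t) • ((lam / κ) • metricProj (κ • permutohedron q) c) + t • c ∈
        intrinsicInterior ℝ (lam • face q s J) := by
  intro t ht
  obtain ⟨x, hx, hxp⟩ :=
    metricProj_smul_permutohedron_mem_smul_face hκ hκlam (intrinsicInterior_subset hc)
  have hmem : (lam / κ) • metricProj (κ • permutohedron q) c ∈ lam • face q s J := by
    rw [← hxp, smul_smul, div_mul_cancel₀ _ hκ.ne']
    exact Set.smul_mem_smul_set hx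
  exact ((convex_convexHull ℝ _).smul lam).combo_mem_intrinsicInterior hmem hc ht

/-- for `0 < κ ≤ λ` and `c` in the relative interior of `λ·τ_J`, every
point `(1 − t)·(λ/κ)·π_κ(c) + t·c` with `t ∈ (0, 1]` lies in the relative interior of
`λ·τ_J`. -/
theorem segment_mem_intrinsicInterior_scaled_face (q s : ℕ) (hq : 1 ≤ q)
    (κ lam : ℝ) (hκ : 0 < κ) (hκlam : κ ≤ lam)
    (J : OrderedPartition q s) (c : EuclideanSpace ℝ (Fin q))
    (hc : c ∈ intrinsicInterior ℝ (lam • face q s J)) :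
    ∀ t ∈ Set.Ioc (0 : ℝ) 1,
      (1 - t) • ((lam / κ) • metricProj (κ • permutohedron q) c) + t • c ∈
        intrinsicInterior ℝ (lam • face q s J) :=
  segment_mem_intrinsicInterior_scaled_face_general q s κ lam hκ hκlam J c hc
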